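/- A 2×2 complex unitary matrix V₂ satisfies V₂·|+⟩⟨+|·V₂† = |−⟩⟨−| if and only if there exist α, γ ∈ ℝ such that V₂ = e^{iα}·[[i·cos(γ/2), −sin(γ/2)], [sin(γ/2), −i·cos(γ/2)]]. -/

import Mathlib

open Matrix

noncomputable section

/-- The projector |+⟩⟨+|. -/
def Pplus : Matrix (Fin 2) (Fin 2) ℂ := !![1/2, 1/2; 1/2, 1/2]

/-- The projector |−⟩⟨−|. -/
def Pminus : Matrix (Fin 2) (Fin 2) ℂ := !![1/2, -(1/2); -(1/2), 1/2]

/-!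
A unitary `V` maps `|+⟩⟨+|` to `|−⟩⟨−|` exactly when `V |+⟩` is a phase multiple of `|−⟩`; since
`|+⟩⟨+| + |−⟩⟨−| = 1`, unitarity then forces `V |−⟩` to be a phase multiple of `|+⟩`. So `V` swaps
`|+⟩` and `|−⟩` up to phases `s = e^{iθ}`, `w = e^{iφ}`, and splitting off the common phase
`e^{i(θ+φ)/2}` leaves the stated matrix with `γ = θ - φ`.
-/

section RankOne

variable {𝕜 m n : Type*} [RCLike 𝕜] [Fintype n]

theorem vecMulVec_star_eq_iff {x y : m → 𝕜} {i : m} (hi : ‖y i‖ = 1) :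
    vecMulVec x (star x) = vecMulVec y (star y) ↔ ∃ c : 𝕜, ‖c‖ = 1 ∧ x = c • y := by
  constructor
  · intro h
    have hxy : ∀ j, x j * star (x i) = y j * star (y i) := fun j => congrFun (congrFun h j) i
    have hxi : ‖x i‖ = 1 := by
      have hnorm := congrArg norm (hxy i)
      simp only [norm_mul, norm_star, hi, mul_one] at hnorm
      nlinarith [norm_nonneg (x i)]
    refine ⟨x i * star (y i), by simp [hxi, hi], funext fun j => ?_⟩
    calc x j = x j * (star (x i) * x i) := by
          rw [RCLike.star_def, RCLike.conj_mul, hxi]; simp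
      _ = y j * star (y i) * x i := by rw [← mul_assoc, hxy]
      _ = (x i * star (y i)) * y j := by ring
  · rintro ⟨c, hc, rfl⟩
    have hcc : c * star c = 1 := by rw [RCLike.star_def, RCLike.mul_conj, hc]; simp
    ext j k
    simp only [vecMulVec_apply, Pi.smul_apply, Pi.star_apply, smul_eq_mul, star_mul']
    linear_combination (y j * star (y k)) * hcc

theorem mul_vecMulVec_star_mul_conjTranspose (V : Matrix m n 𝕜) (u : n → 𝕜) :
    V * vecMulVec u (star u) * Vᴴ = vecMulVec (V *ᵥ u) (star (V *ᵥ u)) := by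
  rw [mul_vecMulVec, vecMulVec_mul, star_mulVec]

end RankOne

theorem Pplus_eq_vecMulVec : Pplus = (2 : ℂ)⁻¹ • vecMulVec ![1, 1] (star ![1, 1]) := by
  ext i j
  rw [Matrix.smul_apply, vecMulVec_apply]
  fin_cases i <;> fin_cases j <;> norm_num [Pplus]

theorem Pminus_eq_vecMulVec : Pminus = (2 : ℂ)⁻¹ • vecMulVec ![1, -1] (star ![1, -1]) := by
  ext i j
  rw [Matrix.smul_apply, vecMulVec_apply]
  fin_cases i <;> fin_cases j <;> norm_num [Pminus]

theorem Pplus_add_Pminus : Pplus + Pminus = 1 := by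
  ext i j
  fin_cases i <;> fin_cases j <;> norm_num [Pplus, Pminus]

theorem conj_Pplus_eq_Pminus_iff (V : Matrix (Fin 2) (Fin 2) ℂ) :
    V * Pplus * Vᴴ = Pminus ↔ ∃ s : ℂ, ‖s‖ = 1 ∧ V *ᵥ ![1, 1] = s • ![1, -1] := by
  rw [Pplus_eq_vecMulVec, Pminus_eq_vecMulVec, Matrix.mul_smul, Matrix.smul_mul,
    mul_vecMulVec_star_mul_conjTranspose, smul_right_inj (by norm_num),
    vecMulVec_star_eq_iff (i := 0) (by simp)]

theorem conj_Pminus_eq_Pplus_iff (V : Matrix (Fin 2) (Fin 2) ℂ) :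
    V * Pminus * Vᴴ = Pplus ↔ ∃ w : ℂ, ‖w‖ = 1 ∧ V *ᵥ ![1, -1] = w • ![1, 1] := by
  rw [Pplus_eq_vecMulVec, Pminus_eq_vecMulVec, Matrix.mul_smul, Matrix.smul_mul,
    mul_vecMulVec_star_mul_conjTranspose, smul_right_inj (by norm_num),
    vecMulVec_star_eq_iff (i := 0) (by simp)]

theorem conj_Pminus_eq_Pplus {V : Matrix (Fin 2) (Fin 2) ℂ} (hV : V ∈ unitaryGroup (Fin 2) ℂ)
    (h : V * Pplus * Vᴴ = Pminus) : V * Pminus * Vᴴ = Pplus := by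
  have hVV : V * Vᴴ = 1 := mem_unitaryGroup_iff.mp hV
  calc V * Pminus * Vᴴ = V * Vᴴ - V * Pplus * Vᴴ := by
        rw [eq_sub_of_add_eq' Pplus_add_Pminus, mul_sub, sub_mul, mul_one]
    _ = Pplus := by rw [hVV, h, ← Pplus_add_Pminus, add_sub_cancel_right]

-- The matrix with `|+⟩ ↦ s |−⟩` and `|−⟩ ↦ w |+⟩`.
def plusMinusSwap (s w : ℂ) : Matrix (Fin 2) (Fin 2) ℂ :=
  !![(s + w) / 2, (s - w) / 2; (w - s) / 2, -(s + w) / 2]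

theorem plusMinusSwap_mulVec_plus (s w : ℂ) : plusMinusSwap s w *ᵥ ![1, 1] = s • ![1, -1] := by
  ext i
  fin_cases i <;>
    simp only [plusMinusSwap, mulVec, dotProduct, Fin.sum_univ_two, Fin.zero_eta, Fin.mk_one,
      of_apply, cons_val', cons_val_zero, cons_val_one, cons_val_fin_one, Pi.smul_apply,
      smul_eq_mul] <;>
    ring

theorem eq_plusMinusSwap {V : Matrix (Fin 2) (Fin 2) ℂ} {s w : ℂ}
    (hs : V *ᵥ ![1, 1] = s • ![1, -1]) (hw : V *ᵥ ![1, -1] = w • ![1, 1]) :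
    V = plusMinusSwap s w := by
  have hs0 := congrFun hs 0
  have hs1 := congrFun hs 1
  have hw0 := congrFun hw 0
  have hw1 := congrFun hw 1
  simp only [mulVec, dotProduct, Fin.sum_univ_two, cons_val_zero, cons_val_one, cons_val_fin_one,
    Pi.smul_apply, smul_eq_mul, mul_one, mul_neg] at hs0 hs1 hw0 hw1
  ext i j
  fin_cases i <;> fin_cases j <;>
    simp only [plusMinusSwap, Fin.zero_eta, Fin.mk_one, of_apply, cons_val', cons_val_zero,
      cons_val_one, cons_val_fin_one]
  · linear_combination (hs0 + hw0) / 2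
  · linear_combination (hs0 - hw0) / 2
  · linear_combination (hs1 + hw1) / 2
  · linear_combination (hs1 - hw1) / 2

theorem exp_smul_eq_plusMinusSwap (α γ : ℝ) :
    Complex.exp ((α : ℂ) * Complex.I) •
        !![Complex.I * (Real.cos (γ / 2) : ℂ), -(Real.sin (γ / 2) : ℂ);
           (Real.sin (γ / 2) : ℂ), -Complex.I * (Real.cos (γ / 2) : ℂ)] =
      plusMinusSwap (Complex.exp ((α + Real.pi / 2 + γ / 2 : ℝ) * Complex.I))
        (Complex.exp ((α + Real.pi / 2 - γ / 2 : ℝ) * Complex.I)) := by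
  have hphase : ∀ x : ℝ, Complex.exp ((α + Real.pi / 2 + x : ℝ) * Complex.I) =
      Complex.exp (α * Complex.I) * Complex.I * Complex.exp (x * Complex.I) := by
    intro x
    calc Complex.exp ((α + Real.pi / 2 + x : ℝ) * Complex.I)
        = Complex.exp (α * Complex.I) * Complex.exp (Real.pi / 2 * Complex.I) *
            Complex.exp (x * Complex.I) := by
          rw [← Complex.exp_add, ← Complex.exp_add]; push_cast; ring_nf
      _ = _ := by rw [Complex.exp_pi_div_two_mul_I]
  have hminus := hphase (-(γ / 2))
  rw [← sub_eq_add_neg] at hminus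
  rw [hphase, hminus]
  ext i j
  fin_cases i <;> fin_cases j <;>
    simp only [Matrix.smul_apply, plusMinusSwap, Fin.zero_eta, Fin.mk_one, of_apply, cons_val',
      cons_val_zero, cons_val_one, cons_val_fin_one, smul_eq_mul, Complex.ofReal_cos,
      Complex.ofReal_sin, Complex.cos, Complex.sin, Complex.ofReal_div, Complex.ofReal_ofNat,
      Complex.ofReal_neg] <;>
    ring

theorem V2_characterization (V₂ : Matrix (Fin 2) (Fin 2) ℂ)
    (hV₂ : V₂ ∈ Matrix.unitaryGroup (Fin 2) ℂ) :
    V₂ * Pplus * V₂ᴴ = Pminus ↔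
      ∃ α γ : ℝ, V₂ = Complex.exp ((α : ℂ) * Complex.I) •
        !![Complex.I * (Real.cos (γ / 2) : ℂ), -(Real.sin (γ / 2) : ℂ);
           (Real.sin (γ / 2) : ℂ), -Complex.I * (Real.cos (γ / 2) : ℂ)] := by
  constructor
  · intro h
    obtain ⟨s, hs, hVs⟩ := (conj_Pplus_eq_Pminus_iff V₂).mp h
    obtain ⟨w, hw, hVw⟩ := (conj_Pminus_eq_Pplus_iff V₂).mp (conj_Pminus_eq_Pplus hV₂ h)
    obtain ⟨θ, rfl⟩ := (Complex.norm_eq_one_iff s).mp hs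
    obtain ⟨φ, rfl⟩ := (Complex.norm_eq_one_iff w).mp hw
    refine ⟨(θ + φ) / 2 - Real.pi / 2, θ - φ, ?_⟩
    rw [exp_smul_eq_plusMinusSwap, eq_plusMinusSwap hVs hVw]
    congr 4 <;> ring
  · rintro ⟨α, γ, rfl⟩
    rw [exp_smul_eq_plusMinusSwap, conj_Pplus_eq_Pminus_iff]
    exact ⟨_, Complex.norm_exp_ofReal_mul_I _, plusMinusSwap_mulVec_plus _ _⟩
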